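/- Let w, y ∈ W^J with y ≤ w. Then P^{J,−1}_{y,w} = Σ_{x ∈ W_J, yx ≤ w} (−1)^{ℓ(x)} P_{yx,w}, where P_{yx,w} are the ordinary Kazhdan–Lusztig polynomials of (W,S). -/

import Mathlib

namespace KLPaper

open Polynomial
open scoped Classical

variable {B : Type*} {W : Type*} [Group W] {M : CoxeterMatrix B}

/-- The Bruhat order on a Coxeter group: generated by right multiplication by
reflections which increases the length. -/
def bruhatLE (cs : CoxeterSystem M W) : W → W → Prop :=
  Relation.ReflTransGen (fun x y =>
    (∃ t, cs.IsReflection t ∧ y = x * t) ∧ cs.length x < cs.length y)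

/-- A commutative ring `R` containing `ℤ[q,q⁻¹]`, with a direct sum decomposition
`R = ⊕_{k ∈ ℤ} R_k` into additive subgroups and an involutive ring endomorphism `conj`
such that `R_i R_j ⊆ R_{i+j}`, `conj R_i = R_{-i}`, `1 ∈ R_0`, `q ∈ R_2`, `conj q = q⁻¹`. -/
structure KLRing (R : Type*) [CommRing R] where
  q : R
  qinv : R
  q_qinv : q * qinv = 1
  grade : ℤ → AddSubgroup R
  decomp : DirectSum.IsInternal grade
  conj : R →+* R
  conj_conj : ∀ r : R, conj (conj r) = r
  grade_mul : ∀ (i j : ℤ) (r s : R), r ∈ grade i → s ∈ grade j → r * s ∈ grade (i + j)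
  conj_grade : ∀ (i : ℤ) (r : R), r ∈ grade i → conj r ∈ grade (-i)
  one_mem : (1 : R) ∈ grade 0
  q_mem : q ∈ grade 2
  conj_q : conj q = qinv
  laurent_inj : Function.Injective fun f : ℤ →₀ ℤ =>
    f.sum fun k c => c • (if 0 ≤ k then q ^ k.toNat else qinv ^ (-k).toNat)

variable {R : Type*} [CommRing R]

/-- The subgroup `R_0 + R_1 + ⋯ + R_{n-1} = ⊕_{i=0}^{n-1} R_i` of `R`. -/
def KLRing.gradeSum (K : KLRing R) (n : ℕ) : AddSubgroup R :=
  ⨆ i ∈ Finset.range n, K.grade (i : ℤ)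

/-- `r` belongs to `ℤ[q] ⊆ R`. -/
def KLRing.InZq (K : KLRing R) (r : R) : Prop :=
  ∃ p : Polynomial ℤ, Polynomial.aeval K.q p = r

/-- The Hecke algebra of `(W, S)` over `R`: the free `R`-module with basis
`{T_w}_{w ∈ W}`, with multiplication determined by `T_{w₁} T_{w₂} = T_{w₁ w₂}`
whenever `ℓ(w₁w₂) = ℓ(w₁) + ℓ(w₂)` and `(T_s + 1)(T_s - q) = 0` for `s ∈ S`. -/
structure Hecke (cs : CoxeterSystem M W) (R : Type*) [CommRing R] (q : R) where
  carrier : Type*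
  [ring : Ring carrier]
  [alg : Algebra R carrier]
  T : W → carrier
  basis : Module.Basis W R carrier
  basis_eq : ∀ w : W, basis w = T w
  T_mul : ∀ w₁ w₂ : W, cs.length (w₁ * w₂) = cs.length w₁ + cs.length w₂ →
    T w₁ * T w₂ = T (w₁ * w₂)
  T_quad : ∀ i : B, (T (cs.simple i) + 1) * (T (cs.simple i) - algebraMap R carrier q) = 0

attribute [instance] Hecke.ring Hecke.alg

variable {cs : CoxeterSystem M W}

/-- `bar` is the bar involution `Σ r_w T_w ↦ Σ conj(r_w) (T_{w⁻¹})⁻¹` of the Hecke algebra. -/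
def IsBar (K : KLRing R) (Hk : Hecke cs R K.q) (bar : Hk.carrier →+* Hk.carrier) : Prop :=
  ∀ (r : R) (w : W), bar (r • Hk.T w) = K.conj r • Ring.inverse (Hk.T w⁻¹)

/-- `j` is the involution `j(Σ r_w T_w) = Σ r_w (-q)^{ℓ(w)} (T_{w⁻¹})⁻¹` of the Hecke algebra. -/
def IsJ (K : KLRing R) (Hk : Hecke cs R K.q) (j : Hk.carrier →ₐ[R] Hk.carrier) : Prop :=
  ∀ w : W, j (Hk.T w) = (-K.q) ^ cs.length w • Ring.inverse (Hk.T w⁻¹)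

/-- `C` is the Kazhdan–Lusztig basis element `C_w`:
`C = Σ_{y ≤ w} P_{y,w} T_y` with `P_{w,w} = 1`,
`P_{y,w} ∈ ⊕_{i=0}^{ℓ(w)-ℓ(y)-1} R_i` for `y < w`, and `bar C = q^{-ℓ(w)} C`.
(The coefficient `P_{y,w}` of `C_w` is `Hk.basis.repr C y`.) -/
def IsKLElt (K : KLRing R) (Hk : Hecke cs R K.q)
    (bar : Hk.carrier →+* Hk.carrier) (w : W) (C : Hk.carrier) : Prop :=
  Hk.basis.repr C w = 1 ∧
  (∀ y : W, Hk.basis.repr C y ≠ 0 → bruhatLE cs y w) ∧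
  (∀ y : W, bruhatLE cs y w → y ≠ w →
    Hk.basis.repr C y ∈ K.gradeSum (cs.length w - cs.length y)) ∧
  bar C = K.qinv ^ cs.length w • C

/-- The standard parabolic subgroup `W_J = ⟨J⟩`. -/
def WJ (cs : CoxeterSystem M W) (J : Set B) : Subgroup W :=
  Subgroup.closure (cs.simple '' J)

/-- `W^J`: the set of minimal length coset representatives of `W/W_J`,
i.e. the `w ∈ W` with `ws > w` for all `s ∈ J`. -/
def minReps (cs : CoxeterSystem M W) (J : Set B) : Set W :=
  {w | ∀ i ∈ J, cs.length w < cs.length (w * cs.simple i)}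

/-- The Hecke algebra `H(W_J)` of the standard parabolic subgroup `W_J`
(with generating set `J`; the length function of `(W_J, J)` is the restriction
of that of `(W, S)`). -/
structure HeckeJ (cs : CoxeterSystem M W) (J : Set B) (R : Type*) [CommRing R] (q : R) where
  carrier : Type*
  [ring : Ring carrier]
  [alg : Algebra R carrier]
  T : WJ cs J → carrier
  basis : Module.Basis (WJ cs J) R carrier
  basis_eq : ∀ x, basis x = T x
  T_mul : ∀ x₁ x₂ : WJ cs J,
    cs.length ((x₁ : W) * (x₂ : W)) = cs.length (x₁ : W) + cs.length (x₂ : W) →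
    T x₁ * T x₂ = T (x₁ * x₂)
  T_quad : ∀ (i : B) (hi : i ∈ J),
    (T ⟨cs.simple i, Subgroup.subset_closure ⟨i, hi, rfl⟩⟩ + 1) *
      (T ⟨cs.simple i, Subgroup.subset_closure ⟨i, hi, rfl⟩⟩ - algebraMap R carrier q) = 0

attribute [instance] HeckeJ.ring HeckeJ.alg

/-- `(Mod, φ)` is (a realization of) the induced module `H^{J,a} = H ⊗_{H(W_J)} R^a`
together with `φ = φ^{J,a} : h ↦ h ⊗ 1^a`:  `φ` is surjective and its kernel is
the `R`-span of the elements `h (T_s - a)`, `s ∈ J`, which is exactly the kernel of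
`h ↦ h ⊗ 1^a`. -/
def IsInduced {q : R} (Hk : Hecke cs R q) (J : Set B) (a : R)
    (Mod : Type*) [AddCommGroup Mod] [Module R Mod] (φ : Hk.carrier →ₗ[R] Mod) : Prop :=
  Function.Surjective φ ∧
  LinearMap.ker φ = Submodule.span R
    {h : Hk.carrier | ∃ (g : Hk.carrier) (i : B), i ∈ J ∧
      h = g * (Hk.T (cs.simple i) - algebraMap R Hk.carrier a)}

/-- `C` is the parabolic Kazhdan–Lusztig basis element `C_w^{J,a}` of `H^{J,a}`:
`C = Σ_{y ∈ W^J, y ≤ w} P^{J,a}_{y,w} T_y^{J,a}` with `P^{J,a}_{w,w} = 1`,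
`P^{J,a}_{y,w} ∈ ⊕_{i=0}^{ℓ(w)-ℓ(y)-1} R_i` for `y < w`, and `barJ C = q^{-ℓ(w)} C`,
where `b` is the basis `(T_y^{J,a})_{y ∈ W^J}` of `H^{J,a}` and `barJ` its bar involution.
(The coefficient `P^{J,a}_{y,w}` of `C_w^{J,a}` is `b.repr C y`.) -/
def IsKLEltJ (K : KLRing R) {J : Set B} {Mod : Type*} [AddCommGroup Mod] [Module R Mod]
    (b : Module.Basis (minReps cs J) R Mod) (barJ : Mod →+ Mod)
    (w : minReps cs J) (C : Mod) : Prop :=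
  b.repr C w = 1 ∧
  (∀ y : minReps cs J, b.repr C y ≠ 0 → bruhatLE cs y.1 w.1) ∧
  (∀ y : minReps cs J, bruhatLE cs y.1 w.1 → y ≠ w →
    b.repr C y ∈ K.gradeSum (cs.length w.1 - cs.length y.1)) ∧
  barJ C = K.qinv ^ cs.length w.1 • C

/-!
The image `φ(C_w)` of the Kazhdan–Lusztig element already has the defining properties of
`C_w^{J,-1}`. Indeed `φ(T_{ux}) = (-1)^{ℓ(x)} T_u^{J,-1}` for `u ∈ W^J`, `x ∈ W_J`, with
`ℓ(ux) = ℓ(u) + ℓ(x)`, so the coefficient of `φ(C_w)` at `u` is `Σ_{x ∈ W_J} (-1)^{ℓ(x)} P_{ux,w}`,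
which has the required support and degree bounds; and `φ` intertwines the bar involutions.
Parabolic Kazhdan–Lusztig elements are unique since the bar involution of `H^{J,-1}` is
unitriangular: at a coefficient of maximal length, the difference of two of them gives
`d ∈ R_0 ⊕ ⋯ ⊕ R_{n-1}` with `conj d = q^{-n} d`, and the grading forces `d = 0`.
-/

theorem bruhatLE.length_le {x z : W} (h : bruhatLE cs x z) : cs.length x ≤ cs.length z := by
  induction h with
  | refl => exact le_rfl
  | tail _ hstep ih => exact ih.trans hstep.2.le

theorem bruhatLE_mul_wordProd (u : W) (ω : List B)
    (h : cs.length (u * cs.wordProd ω) = cs.length u + ω.length) :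
    bruhatLE cs u (u * cs.wordProd ω) := by
  induction ω using List.reverseRecOn with
  | nil =>
    rw [cs.wordProd_nil, mul_one]
    exact Relation.ReflTransGen.refl
  | append_singleton ω i ih =>
    rw [cs.wordProd_append, cs.wordProd_singleton, ← mul_assoc] at h ⊢
    simp only [List.length_append, List.length_singleton] at h
    have hmul := cs.length_mul_le u (cs.wordProd ω)
    have hword := cs.length_wordProd_le ω
    have hsimple := cs.length_mul_simple (u * cs.wordProd ω) i
    have hv : cs.length (u * cs.wordProd ω) = cs.length u + ω.length := by omega
    exact (ih hv).tail ⟨⟨cs.simple i, cs.isReflection_simple i, rfl⟩, by omega⟩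

theorem wordProd_mem_WJ {J : Set B} {ω : List B} (hω : ∀ i ∈ ω, i ∈ J) :
    cs.wordProd ω ∈ WJ cs J := by
  induction ω with
  | nil => simp
  | cons i ω ih =>
    rw [cs.wordProd_cons]
    exact mul_mem (Subgroup.subset_closure ⟨i, hω i (by simp), rfl⟩)
      (ih fun j hj => hω j (by simp [hj]))

theorem exists_wordProd_eq_of_mem_WJ {J : Set B} {x : W} (hx : x ∈ WJ cs J) :
    ∃ ω : List B, (∀ i ∈ ω, i ∈ J) ∧ cs.wordProd ω = x := by
  induction hx using Subgroup.closure_induction with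
  | mem g hg =>
    obtain ⟨i, hi, rfl⟩ := hg
    exact ⟨[i], by simpa using hi, cs.wordProd_singleton i⟩
  | one => exact ⟨[], by simp, cs.wordProd_nil⟩
  | mul g g' _ _ ihg ihg' =>
    obtain ⟨ω, hω, rfl⟩ := ihg
    obtain ⟨ω', hω', rfl⟩ := ihg'
    refine ⟨ω ++ ω', fun i hi => ?_, cs.wordProd_append ω ω'⟩
    rcases List.mem_append.mp hi with h | h
    · exact hω i h
    · exact hω' i h
  | inv g _ ihg =>
    obtain ⟨ω, hω, rfl⟩ := ihg
    exact ⟨ω.reverse, fun i hi => hω i (List.mem_reverse.mp hi), cs.wordProd_reverse ω⟩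

theorem exists_minReps_mul_wordProd (cs : CoxeterSystem M W) (J : Set B) (z : W) :
    ∃ u ∈ minReps cs J, ∃ ω : List B, (∀ i ∈ ω, i ∈ J) ∧
      z = u * cs.wordProd ω ∧ cs.length z = cs.length u + ω.length := by
  induction hn : cs.length z using Nat.strong_induction_on generalizing z with
  | _ n ih =>
    by_cases hz : z ∈ minReps cs J
    · exact ⟨z, hz, [], by simp, by simp, by simp [hn]⟩
    obtain ⟨i, hiJ, hdesc⟩ : ∃ i ∈ J, ¬ cs.length z < cs.length (z * cs.simple i) := by
      simpa [minReps] using hz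
    have hlen := cs.length_mul_simple z i
    obtain ⟨u, hu, ω, hωJ, heq, hlen'⟩ := ih _ (by omega) (z * cs.simple i) rfl
    refine ⟨u, hu, ω ++ [i], fun j hj => ?_, ?_, ?_⟩
    · rcases List.mem_append.mp hj with h | h
      · exact hωJ j h
      · rwa [List.mem_singleton.mp h]
    · rw [cs.wordProd_append, cs.wordProd_singleton, ← mul_assoc, ← heq,
        cs.simple_mul_simple_cancel_right]
    · simp only [List.length_append, List.length_singleton]
      omega

namespace KLRing

theorem nontrivial (K : KLRing R) : Nontrivial R :=
  Function.Injective.nontrivial K.laurent_inj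

variable (K : KLRing R)

theorem qinv_pow_mem (n : ℕ) : K.qinv ^ n ∈ K.grade (-2 * n) := by
  induction n with
  | zero => simpa using K.one_mem
  | succ m ih =>
    have := K.grade_mul _ _ _ _ ih (by simpa [K.conj_q] using K.conj_grade 2 K.q K.q_mem)
    rw [← pow_succ] at this
    convert this using 2
    push_cast
    ring

theorem gradeSum_mono {m n : ℕ} (h : m ≤ n) : K.gradeSum m ≤ K.gradeSum n :=
  biSup_mono fun _ hi => Finset.mem_range.mpr ((Finset.mem_range.mp hi).trans_le h)

theorem eq_zero_of_mem_gradeSum_zero {r : R} (hr : r ∈ K.gradeSum 0) : r = 0 := by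
  simpa [gradeSum] using hr

theorem gradeSum_le_biSup (n : ℕ) : K.gradeSum n ≤ ⨆ i ∈ Set.Ico (0 : ℤ) n, K.grade i :=
  iSup₂_le fun i hi => le_biSup K.grade ⟨by omega, by simpa using hi⟩

theorem map_biSup_grade_le (f : R →+ R) (g : ℤ → ℤ)
    (hf : ∀ i, ∀ r ∈ K.grade i, f r ∈ K.grade (g i)) (s : Set ℤ) :
    (⨆ i ∈ s, K.grade i).map f ≤ ⨆ i ∈ g '' s, K.grade i := by
  simp only [AddSubgroup.map_iSup]
  refine iSup₂_le fun i hi => ?_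
  rw [AddSubgroup.map_le_iff_le_comap]
  exact fun r hr => le_biSup K.grade (Set.mem_image_of_mem g hi) (hf i r hr)

/-- `conj d` lives in degrees `(-n, 0]` and `q^{-n} d` in degrees `[-2n, -n)`. -/
theorem eq_zero_of_conj_eq (n : ℕ) {d : R} (hd : d ∈ K.gradeSum n)
    (h : K.conj d = K.qinv ^ n * d) : d = 0 := by
  have hd' := K.gradeSum_le_biSup n hd
  have hconj := K.map_biSup_grade_le K.conj.toAddMonoidHom Neg.neg
    (fun i r hr => K.conj_grade i r hr) _ (AddSubgroup.mem_map_of_mem _ hd')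
  have hmul := K.map_biSup_grade_le (AddMonoidHom.mulLeft (K.qinv ^ n)) (· + -2 * n)
    (fun i r hr => by simpa [add_comm] using K.grade_mul _ _ _ _ (K.qinv_pow_mem n) hr) _
    (AddSubgroup.mem_map_of_mem _ hd')
  have hdisj : Disjoint (Neg.neg '' Set.Ico (0 : ℤ) n) ((· + -2 * n) '' Set.Ico (0 : ℤ) n) := by
    rw [Set.disjoint_left]
    rintro _ ⟨i, hi, rfl⟩ ⟨j, hj, hij⟩
    simp only [Set.mem_Ico] at hi hj hij
    omega
  have hzero : K.conj d = 0 :=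
    AddSubgroup.disjoint_def.mp (K.decomp.addSubgroup_iSupIndep.disjoint_biSup_biSup' hdisj
      ((Set.finite_Ico _ _).image _)) hconj (h ▸ hmul)
  simpa [K.conj_conj] using congrArg K.conj hzero

end KLRing

theorem ringInverse_mul_of_isUnit {A : Type*} [MonoidWithZero A] {a b : A} (ha : IsUnit a)
    (hb : IsUnit b) :
    Ring.inverse (a * b) = Ring.inverse b * Ring.inverse a := by
  obtain ⟨ua, rfl⟩ := ha
  obtain ⟨ub, rfl⟩ := hb
  rw [← Units.val_mul, Ring.inverse_unit, Ring.inverse_unit, Ring.inverse_unit, mul_inv_rev,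
    Units.val_mul]

namespace Hecke

variable {q : R} (Hk : Hecke cs R q)

theorem T_one : Hk.T 1 = 1 := by
  have hmul : LinearMap.mulLeft R (Hk.T 1) = LinearMap.id :=
    Hk.basis.ext fun v => by
      simp [Hk.basis_eq, Hk.T_mul 1 v (by simp)]
  simpa using LinearMap.congr_fun hmul 1

theorem T_simple_mul_self (i : B) :
    Hk.T (cs.simple i) * Hk.T (cs.simple i) =
      q • Hk.T (cs.simple i) + q • 1 - Hk.T (cs.simple i) := by
  have h := Hk.T_quad i
  simp only [Algebra.algebraMap_eq_smul_one, add_mul, mul_sub, one_mul, mul_one,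
    mul_smul_comm, smul_add] at h
  rw [← sub_eq_zero, ← h]
  abel

def lowerSpan (n : ℕ) : Submodule R Hk.carrier :=
  Submodule.span R (Hk.T '' {z | cs.length z < n})

theorem T_mem_lowerSpan {z : W} {n : ℕ} (h : cs.length z < n) : Hk.T z ∈ Hk.lowerSpan n :=
  Submodule.subset_span ⟨z, h, rfl⟩

theorem lowerSpan_mono {m n : ℕ} (h : m ≤ n) : Hk.lowerSpan m ≤ Hk.lowerSpan n :=
  Submodule.span_mono (Set.image_mono fun _ hz => lt_of_lt_of_le hz h)

theorem T_simple_mul_mem_lowerSpan (i : B) {n : ℕ} {e : Hk.carrier}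
    (he : e ∈ Hk.lowerSpan n) : Hk.T (cs.simple i) * e ∈ Hk.lowerSpan (n + 1) := by
  induction he using Submodule.span_induction with
  | mem x hx =>
    obtain ⟨z, hz : cs.length z < n, rfl⟩ := hx
    rcases cs.length_simple_mul z i with hasc | hdesc
    · rw [Hk.T_mul _ _ (by rw [cs.length_simple]; omega)]
      exact Hk.T_mem_lowerSpan (by omega)
    · have hTz : Hk.T z = Hk.T (cs.simple i) * Hk.T (cs.simple i * z) := by
        rw [Hk.T_mul _ _ (by rw [cs.length_simple, cs.simple_mul_simple_cancel_left]; omega),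
          cs.simple_mul_simple_cancel_left]
      have hsz : Hk.T (cs.simple i * z) ∈ Hk.lowerSpan (n + 1) := Hk.T_mem_lowerSpan (by omega)
      have hz' : Hk.T z ∈ Hk.lowerSpan (n + 1) := Hk.T_mem_lowerSpan (by omega)
      rw [hTz, ← mul_assoc, T_simple_mul_self, sub_mul, add_mul, smul_mul_assoc, smul_mul_assoc,
        one_mul, ← hTz]
      exact sub_mem (add_mem (Submodule.smul_mem _ _ hz') (Submodule.smul_mem _ _ hsz)) hz'
  | zero => simp
  | add x y _ _ hx hy => simpa [mul_add] using add_mem hx hy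
  | smul a x _ hx => simpa [mul_smul_comm] using Submodule.smul_mem _ a hx

variable {q' : R} (hq : q * q' = 1)
include hq

theorem T_simple_mul_inv (i : B) :
    Hk.T (cs.simple i) * (q' • Hk.T (cs.simple i) + q' • 1 - 1) = 1 := by
  rw [mul_sub, mul_add, mul_smul_comm, mul_smul_comm, mul_one, T_simple_mul_self,
    smul_sub, smul_add, smul_smul, smul_smul, mul_comm q' q, hq, one_smul, one_smul]
  abel

theorem inv_mul_T_simple (i : B) :
    (q' • Hk.T (cs.simple i) + q' • 1 - 1) * Hk.T (cs.simple i) = 1 := by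
  rw [sub_mul, add_mul, smul_mul_assoc, smul_mul_assoc, one_mul, T_simple_mul_self,
    smul_sub, smul_add, smul_smul, smul_smul, mul_comm q' q, hq, one_smul, one_smul]
  abel

theorem isUnit_T_simple (i : B) : IsUnit (Hk.T (cs.simple i)) :=
  ⟨⟨_, _, Hk.T_simple_mul_inv hq i, Hk.inv_mul_T_simple hq i⟩, rfl⟩

theorem ringInverse_T_simple (i : B) :
    Ring.inverse (Hk.T (cs.simple i)) = q' • Hk.T (cs.simple i) + q' • 1 - 1 :=
  Ring.inverse_unit ⟨_, _, Hk.T_simple_mul_inv hq i, Hk.inv_mul_T_simple hq i⟩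

theorem isUnit_T (z : W) : IsUnit (Hk.T z) := by
  induction z using cs.simple_induction_left with
  | one => simp [T_one]
  | mul_simple_left z i hz =>
    obtain ⟨u, hu⟩ := Hk.isUnit_T_simple hq i
    rcases cs.length_simple_mul z i with hasc | hdesc
    · rw [← Hk.T_mul _ _ (by rw [cs.length_simple]; omega)]
      exact (Hk.isUnit_T_simple hq i).mul hz
    · have hTz : Hk.T z = u * Hk.T (cs.simple i * z) := by
        rw [hu, Hk.T_mul _ _ (by rw [cs.length_simple, cs.simple_mul_simple_cancel_left]; omega),
          cs.simple_mul_simple_cancel_left]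
      rw [← u.inv_mul_cancel_left (Hk.T (cs.simple i * z)), ← hTz]
      exact u⁻¹.isUnit.mul hz

theorem ringInverse_T_inv_sub_mem_lowerSpan (u : W) :
    Ring.inverse (Hk.T u⁻¹) - q' ^ cs.length u • Hk.T u ∈ Hk.lowerSpan (cs.length u) := by
  induction hn : cs.length u using Nat.strong_induction_on generalizing u with
  | _ n ih =>
    rcases eq_or_ne u 1 with rfl | hu
    · simp [T_one, ← hn]
    obtain ⟨i, hi⟩ := cs.exists_leftDescent_of_ne_one hu
    set v := cs.simple i * u
    have hv : cs.length v + 1 = n := hn ▸ cs.isLeftDescent_iff.mp hi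
    have huv : u = cs.simple i * v := (cs.simple_mul_simple_cancel_left i).symm
    have hTu : Hk.T (cs.simple i) * Hk.T v = Hk.T u := by
      rw [Hk.T_mul _ _ (by rw [cs.length_simple, ← huv]; omega), ← huv]
    have hTu' : Hk.T u⁻¹ = Hk.T v⁻¹ * Hk.T (cs.simple i) := by
      rw [Hk.T_mul _ _ (by rw [cs.length_simple, cs.length_inv, ← cs.inv_simple, ← mul_inv_rev,
        ← huv, cs.length_inv]; omega), ← cs.inv_simple, ← mul_inv_rev, ← huv]
    set e := Ring.inverse (Hk.T v⁻¹) - q' ^ cs.length v • Hk.T v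
    have he : e ∈ Hk.lowerSpan (cs.length v) := ih _ (by omega) v rfl
    have hexp : Ring.inverse (Hk.T u⁻¹) - q' ^ n • Hk.T u =
        q' • (Hk.T (cs.simple i) * e) + (q' ^ cs.length v * (q' - 1)) • Hk.T v
          + (q' - 1) • e := by
      rw [hTu', ringInverse_mul_of_isUnit (Hk.isUnit_T hq _) (Hk.isUnit_T_simple hq i),
        Hk.ringInverse_T_simple hq, ← hv, ← hTu,
        show Ring.inverse (Hk.T v⁻¹) = q' ^ cs.length v • Hk.T v + e by simp [e]]
      simp only [sub_mul, add_mul, mul_add, smul_mul_assoc, mul_smul_comm, one_mul]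
      module
    rw [hexp, ← hv]
    refine add_mem (add_mem ?_ ?_) ?_
    · exact Submodule.smul_mem _ _ (Hk.T_simple_mul_mem_lowerSpan i he)
    · exact Submodule.smul_mem _ _ (Hk.T_mem_lowerSpan (by omega))
    · exact Submodule.smul_mem _ _ (Hk.lowerSpan_mono (by omega) he)

end Hecke

namespace IsInduced

variable {q : R} {Hk : Hecke cs R q} {J : Set B} {Mod : Type*} [AddCommGroup Mod]
  [Module R Mod] {φ : Hk.carrier →ₗ[R] Mod} (hInd : IsInduced Hk J (-1 : R) Mod φ)
include hInd

theorem map_T_mul_simple (z : W) {i : B} (hi : i ∈ J) :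
    φ (Hk.T (z * cs.simple i)) = -φ (Hk.T z) := by
  have hasc : ∀ z : W, cs.length (z * cs.simple i) = cs.length z + 1 →
      φ (Hk.T (z * cs.simple i)) = -φ (Hk.T z) := by
    intro z hz
    have hker : Hk.T z * (Hk.T (cs.simple i) + 1) ∈ LinearMap.ker φ := by
      rw [hInd.2]
      exact Submodule.subset_span ⟨Hk.T z, i, hi, by simp⟩
    rw [LinearMap.mem_ker, mul_add, mul_one, map_add,
      Hk.T_mul _ _ (by rw [cs.length_simple]; omega)] at hker
    exact eq_neg_of_add_eq_zero_left hker
  rcases cs.length_mul_simple z i with hz | hz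
  · exact hasc z hz
  · rw [← neg_eq_iff_eq_neg, ← hasc _ (by rw [cs.simple_mul_simple_cancel_right]; omega),
      cs.simple_mul_simple_cancel_right]

theorem map_T_mul_wordProd (v : W) {ω : List B} (hω : ∀ i ∈ ω, i ∈ J) :
    φ (Hk.T (v * cs.wordProd ω)) = (-1 : R) ^ ω.length • φ (Hk.T v) := by
  induction ω using List.reverseRecOn with
  | nil => simp
  | append_singleton ω i ih =>
    rw [cs.wordProd_append, cs.wordProd_singleton, ← mul_assoc,
      hInd.map_T_mul_simple _ (hω i (by simp)), ih fun j hj => hω j (by simp [hj])]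
    simp [pow_succ]

variable [Nontrivial R] {b : Module.Basis (minReps cs J) R Mod}
  (hb : ∀ u : minReps cs J, b u = φ (Hk.T u.1))
include hb

/-- Two representatives of one coset give basis vectors that agree up to sign, since
`φ (T_{u x}) = ± φ (T_u)` for `x ∈ W_J`. -/
theorem minReps_eq_of_inv_mul_mem {u₁ u₂ : minReps cs J} (h : u₁.1⁻¹ * u₂.1 ∈ WJ cs J) :
    u₁ = u₂ := by
  by_contra hne
  obtain ⟨ω, hω, hωx⟩ := exists_wordProd_eq_of_mem_WJ h
  have hφ := hInd.map_T_mul_wordProd u₁.1 hω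
  rw [hωx, mul_inv_cancel_left, ← hb, ← hb] at hφ
  simpa [Finsupp.single_apply, hne] using congrArg (fun m => b.repr m u₂) hφ

theorem exists_wordProd_eq (u : minReps cs J) {x : W} (hx : x ∈ WJ cs J) :
    ∃ ω : List B, (∀ i ∈ ω, i ∈ J) ∧ cs.wordProd ω = x ∧
      cs.length (u.1 * x) = cs.length u.1 + ω.length := by
  obtain ⟨u₀, hu₀, ω, hω, hux, hlen⟩ := exists_minReps_mul_wordProd cs J (u.1 * x)
  have hu : u = ⟨u₀, hu₀⟩ := by
    refine hInd.minReps_eq_of_inv_mul_mem hb ?_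
    rw [show u.1⁻¹ * u₀ = x * (cs.wordProd ω)⁻¹ by rw [eq_mul_inv_iff_mul_eq, mul_assoc, ← hux,
      inv_mul_cancel_left]]
    exact mul_mem hx (inv_mem (wordProd_mem_WJ hω))
  subst hu
  exact ⟨ω, hω, (mul_left_cancel hux).symm, hlen⟩

theorem length_mul_of_mem_WJ (u : minReps cs J) {x : W} (hx : x ∈ WJ cs J) :
    cs.length (u.1 * x) = cs.length u.1 + cs.length x := by
  obtain ⟨ω, -, rfl, hlen⟩ := hInd.exists_wordProd_eq hb u hx
  have := cs.length_wordProd_le ω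
  have := cs.length_mul_le u.1 (cs.wordProd ω)
  omega

theorem bruhatLE_mul_of_mem_WJ (u : minReps cs J) {x : W} (hx : x ∈ WJ cs J) :
    bruhatLE cs u.1 (u.1 * x) := by
  obtain ⟨ω, -, rfl, hlen⟩ := hInd.exists_wordProd_eq hb u hx
  exact bruhatLE_mul_wordProd u.1 ω hlen

theorem map_T_mul_of_mem_WJ (u : minReps cs J) {x : W} (hx : x ∈ WJ cs J) :
    φ (Hk.T (u.1 * x)) = (-1 : R) ^ cs.length x • b u := by
  obtain ⟨ω, hω, rfl, hlen⟩ := hInd.exists_wordProd_eq hb u hx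
  rw [hInd.map_T_mul_wordProd _ hω, hb]
  have := hInd.length_mul_of_mem_WJ hb u hx
  congr 2
  omega

theorem repr_map_T (z : W) (u : minReps cs J) :
    b.repr (φ (Hk.T z)) u =
      if u.1⁻¹ * z ∈ WJ cs J then (-1 : R) ^ cs.length (u.1⁻¹ * z) else 0 := by
  obtain ⟨u₀, hu₀, ω, hω, rfl, -⟩ := exists_minReps_mul_wordProd cs J z
  have hx := wordProd_mem_WJ (cs := cs) hω
  rw [hInd.map_T_mul_of_mem_WJ hb ⟨u₀, hu₀⟩ hx, map_smul, b.repr_self]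
  split_ifs with h
  · have hu : ⟨u₀, hu₀⟩ = u := by
      refine hInd.minReps_eq_of_inv_mul_mem hb ?_
      rw [show u₀⁻¹ * u.1 = cs.wordProd ω * (u.1⁻¹ * (u₀ * cs.wordProd ω))⁻¹ by group]
      exact mul_mem hx (inv_mem h)
    subst hu
    simp
  · have hu : (⟨u₀, hu₀⟩ : minReps cs J) ≠ u := by
      rintro rfl
      exact h (by simpa using hx)
    simp [hu]

theorem repr_map (h : Hk.carrier) (u : minReps cs J) :
    b.repr (φ h) u =
      ∑ᶠ x ∈ (WJ cs J : Set W), (-1 : R) ^ cs.length x * Hk.basis.repr h (u.1 * x) := by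
  set F : W → R := fun z => Hk.basis.repr h z * b.repr (φ (Hk.T z)) u
  have hsum : b.repr (φ h) u = ∑ z ∈ (Hk.basis.repr h).support, F z := by
    conv_lhs => rw [← Hk.basis.linearCombination_repr h, Finsupp.linearCombination_apply]
    simp [F, Finsupp.sum, Hk.basis_eq]
  rw [hsum, ← finsum_eq_sum_of_support_subset F fun z hz =>
    Finsupp.mem_support_iff.mpr (left_ne_zero_of_mul hz),
    ← finsum_comp_equiv (Equiv.mulLeft u.1), finsum_mem_def]
  refine finsum_congr fun x => ?_
  simp [F, hInd.repr_map_T hb, Set.indicator_apply, mul_comm]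

theorem repr_map_eq_zero_of_mem_lowerSpan {n : ℕ} {e : Hk.carrier} (he : e ∈ Hk.lowerSpan n)
    {u : minReps cs J} (hu : n ≤ cs.length u.1) : b.repr (φ e) u = 0 := by
  suffices Hk.lowerSpan n ≤ LinearMap.ker ((b.coord u).comp φ) from this he
  refine Submodule.span_le.mpr ?_
  rintro _ ⟨z, hz : cs.length z < n, rfl⟩
  simp only [SetLike.mem_coe, LinearMap.mem_ker, LinearMap.comp_apply, Module.Basis.coord_apply,
    hInd.repr_map_T hb, ite_eq_right_iff]
  intro hx
  have := hInd.length_mul_of_mem_WJ hb u hx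
  rw [mul_inv_cancel_left] at this
  omega

end IsInduced

section Uniqueness

variable {K : KLRing R} {J : Set B} {Mod : Type*} [AddCommGroup Mod] [Module R Mod]
  {b : Module.Basis (minReps cs J) R Mod} {barJ : Mod →+ Mod}

def IsUnitriangularBar (K : KLRing R) (b : Module.Basis (minReps cs J) R Mod)
    (barJ : Mod →+ Mod) : Prop :=
  ∀ (r : R) (u y : minReps cs J), cs.length u.1 ≤ cs.length y.1 →
    b.repr (barJ (r • b u)) y = if u = y then K.conj r * K.qinv ^ cs.length u.1 else 0

theorem IsUnitriangularBar.eq_zero (htri : IsUnitriangularBar K b barJ) {n : ℕ} {D : Mod}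
    (hD : ∀ u, b.repr D u ∈ K.gradeSum (n - cs.length u.1))
    (hbarD : barJ D = K.qinv ^ n • D) : D = 0 := by
  by_contra hne
  have hsupp : (b.repr D).support.Nonempty := by
    simpa [Finsupp.support_nonempty_iff] using hne
  obtain ⟨y, hy, hmax⟩ := (b.repr D).support.exists_max_image (fun u => cs.length u.1) hsupp
  set d := b.repr D y
  have hd : d ≠ 0 := Finsupp.mem_support_iff.mp hy
  have hlen : cs.length y.1 < n := by
    by_contra! h
    exact hd (K.eq_zero_of_mem_gradeSum_zero (by simpa [Nat.sub_eq_zero_of_le h] using hD y))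
  have hcoeff : K.conj d * K.qinv ^ cs.length y.1 = K.qinv ^ n * d := by
    have hsum : barJ D = ∑ u ∈ (b.repr D).support, barJ (b.repr D u • b u) := by
      conv_lhs => rw [← b.linearCombination_repr D, Finsupp.linearCombination_apply]
      exact map_sum barJ _ _
    have := congrArg (fun m => b.repr m y) hsum
    simp only [hbarD, map_smul, Finsupp.smul_apply, smul_eq_mul, map_sum,
      Finsupp.finsetSum_apply] at this
    rw [this, Finset.sum_eq_single y (fun u hu hne => by simp [htri _ u y (hmax u hu), hne])
      (fun h => absurd hy h), htri _ y y le_rfl, if_pos rfl]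
  have hconj : K.conj d = K.qinv ^ (n - cs.length y.1) * d := by
    obtain ⟨k, rfl⟩ := Nat.exists_eq_add_of_le hlen.le
    refine ((IsUnit.of_mul_eq_one_right K.q K.q_qinv).pow (cs.length y.1)).mul_left_injective ?_
    simp only [Nat.add_sub_cancel_left, hcoeff, pow_add]
    ring
  exact hd (K.eq_zero_of_conj_eq _ (hD y) hconj)

theorem IsKLEltJ.unique (htri : IsUnitriangularBar K b barJ) {w : minReps cs J} {C₁ C₂ : Mod}
    (h₁ : IsKLEltJ K b barJ w C₁) (h₂ : IsKLEltJ K b barJ w C₂) : C₁ = C₂ := by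
  refine sub_eq_zero.mp (htri.eq_zero (n := cs.length w.1) (fun u => ?_) ?_)
  · rw [map_sub, Finsupp.sub_apply]
    by_cases huw : u = w
    · simp [huw, h₁.1, h₂.1]
    by_cases hle : bruhatLE cs u.1 w.1
    · exact sub_mem (h₁.2.2.1 u hle huw) (h₂.2.2.1 u hle huw)
    · rw [not_imp_comm.mp (h₁.2.1 u) hle, not_imp_comm.mp (h₂.2.1 u) hle, sub_zero]
      exact zero_mem _
  · rw [map_sub, h₁.2.2.2, h₂.2.2.2, smul_sub]

end Uniqueness

namespace IsInduced

variable {K : KLRing R} {Hk : Hecke cs R K.q} {bar : Hk.carrier →+* Hk.carrier} {J : Set B}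
  {Mod : Type*} [AddCommGroup Mod] [Module R Mod] {φ : Hk.carrier →ₗ[R] Mod}
  (hInd : IsInduced Hk J (-1 : R) Mod φ) {b : Module.Basis (minReps cs J) R Mod}
  (hb : ∀ u : minReps cs J, b u = φ (Hk.T u.1)) {barJ : Mod →+ Mod}
  (hbarJ : ∀ h : Hk.carrier, barJ (φ h) = φ (bar h))
include hInd hb hbarJ

theorem isUnitriangularBar (hbar : IsBar K Hk bar) : IsUnitriangularBar K b barJ := by
  have := K.nontrivial
  intro r u y hle
  set e := Ring.inverse (Hk.T u.1⁻¹) - K.qinv ^ cs.length u.1 • Hk.T u.1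
  have he : e ∈ Hk.lowerSpan (cs.length u.1) :=
    Hk.ringInverse_T_inv_sub_mem_lowerSpan K.q_qinv u.1
  rw [hb, ← map_smul, hbarJ, hbar, show Ring.inverse (Hk.T u.1⁻¹) =
    K.qinv ^ cs.length u.1 • Hk.T u.1 + e by simp [e]]
  by_cases huy : u = y <;>
    simp [hInd.repr_map_eq_zero_of_mem_lowerSpan hb he hle, ← hb, huy, mul_comm]

theorem isKLEltJ_map {w : minReps cs J} {C : Hk.carrier} (hC : IsKLElt K Hk bar w.1 C) :
    IsKLEltJ K b barJ w (φ C) := by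
  have := K.nontrivial
  have hsupp : ∀ (u : minReps cs J) (x : W), x ∈ WJ cs J → Hk.basis.repr C (u.1 * x) ≠ 0 →
      bruhatLE cs u.1 w.1 ∧ cs.length u.1 + cs.length x ≤ cs.length w.1 := by
    intro u x hx hne
    have hle := hC.2.1 _ hne
    exact ⟨(hInd.bruhatLE_mul_of_mem_WJ hb u hx).trans hle,
      hInd.length_mul_of_mem_WJ hb u hx ▸ hle.length_le⟩
  refine ⟨?_, fun u hu => ?_, fun u hle hne => ?_, ?_⟩
  · rw [hInd.repr_map hb, finsum_mem_inter_support_eq' _ _ {1} fun x hx => ?_,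
      finsum_mem_singleton]
    · simpa using hC.1
    refine ⟨fun hxJ => ?_, fun h => (Set.mem_singleton_iff.mp h) ▸ one_mem _⟩
    have := (hsupp w x hxJ (right_ne_zero_of_mul hx)).2
    exact cs.length_eq_zero_iff.mp (by omega)
  · rw [hInd.repr_map hb] at hu
    obtain ⟨x, hx, hne⟩ := exists_ne_zero_of_finsum_mem_ne_zero hu
    exact (hsupp u x hx (right_ne_zero_of_mul hne)).1
  · rw [hInd.repr_map hb]
    refine finsum_mem_induction _ (zero_mem _) (fun _ _ => add_mem) fun x hx => ?_
    by_cases hP : Hk.basis.repr C (u.1 * x) = 0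
    · simp [hP]
    have hux : u.1 * x ≠ w.1 := fun h =>
      hne (hInd.minReps_eq_of_inv_mul_mem hb (by rwa [← h, inv_mul_cancel_left]))
    have hmem := K.gradeSum_mono (n := cs.length w.1 - cs.length u.1)
      (by have := hInd.length_mul_of_mem_WJ hb u hx; omega) (hC.2.2.1 _ (hC.2.1 _ hP) hux)
    rcases neg_one_pow_eq_or R (cs.length x) with h | h <;> simp [h, hmem]
  · rw [hbarJ, hC.2.2.2, map_smul]

end IsInduced

theorem statement11_general (K : KLRing R) (J : Set B) (Hk : Hecke cs R K.q)
    (bar : Hk.carrier →+* Hk.carrier) (hbar : IsBar K Hk bar)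
    (C : W → Hk.carrier) (hC : ∀ w : W, IsKLElt K Hk bar w (C w))
    (Mod : Type*) [AddCommGroup Mod] [Module R Mod]
    (φ : Hk.carrier →ₗ[R] Mod) (hInd : IsInduced Hk J (-1 : R) Mod φ)
    (b : Module.Basis (minReps cs J) R Mod) (hb : ∀ u : minReps cs J, b u = φ (Hk.T u.1))
    (barJ : Mod →+ Mod) (hbarJ : ∀ h : Hk.carrier, barJ (φ h) = φ (bar h))
    (CJ : minReps cs J → Mod) (hCJ : ∀ u : minReps cs J, IsKLEltJ K b barJ u (CJ u))
    (w y : minReps cs J) :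
    b.repr (CJ w) y =
      ∑ᶠ x ∈ {x : W | x ∈ WJ cs J ∧ bruhatLE cs (y.1 * x) w.1},
        (-1 : R) ^ cs.length x * Hk.basis.repr (C w.1) (y.1 * x) := by
  have := K.nontrivial
  have hCJw : CJ w = φ (C w.1) :=
    (hCJ w).unique (hInd.isUnitriangularBar hb hbarJ hbar) (hInd.isKLEltJ_map hb hbarJ (hC w.1))
  rw [hCJw, hInd.repr_map hb]
  refine finsum_mem_inter_support_eq' _ _ _ fun x hx => ⟨fun hxJ => ⟨hxJ, ?_⟩, And.left⟩
  exact (hC w.1).2.1 _ (right_ne_zero_of_mul hx)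

/-- Deodhar: for `w, y ∈ W^J` with `y ≤ w`,
`P^{J,-1}_{y,w} = Σ_{x ∈ W_J, yx ≤ w} (-1)^{ℓ(x)} P_{yx,w}`,
where `P` are the ordinary Kazhdan–Lusztig polynomials of `(W,S)`
(given as `P_{y,w} = Hk.basis.repr (C w) y`) and `P^{J,-1}` the parabolic
Kazhdan–Lusztig polynomials for `a = -1` (given as `P^{J,-1}_{y,w} = b.repr (CJ w) y`). -/
theorem statement11 (K : KLRing R) (J : Set B) (Hk : Hecke cs R K.q)
    (bar : Hk.carrier →+* Hk.carrier) (hbar : IsBar K Hk bar)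
    (C : W → Hk.carrier) (hC : ∀ w : W, IsKLElt K Hk bar w (C w))
    (Mod : Type*) [AddCommGroup Mod] [Module R Mod]
    (φ : Hk.carrier →ₗ[R] Mod) (hInd : IsInduced Hk J (-1 : R) Mod φ)
    (b : Module.Basis (minReps cs J) R Mod) (hb : ∀ u : minReps cs J, b u = φ (Hk.T u.1))
    (barJ : Mod →+ Mod) (hbarJ : ∀ h : Hk.carrier, barJ (φ h) = φ (bar h))
    (CJ : minReps cs J → Mod) (hCJ : ∀ u : minReps cs J, IsKLEltJ K b barJ u (CJ u))
    (w y : minReps cs J) (hyw : bruhatLE cs y.1 w.1) :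
    b.repr (CJ w) y =
      ∑ᶠ x ∈ {x : W | x ∈ WJ cs J ∧ bruhatLE cs (y.1 * x) w.1},
        (-1 : R) ^ cs.length x * Hk.basis.repr (C w.1) (y.1 * x) :=
  statement11_general K J Hk bar hbar C hC Mod φ hInd b hb barJ hbarJ CJ hCJ w y

end KLPaper
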